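/- For any policy π and state s in a finite discounted MDP, max over reward functions R in [-1,1]^(S×A) of Reg(π,R)(s) is at least half of max over pairs (π', R) of Reg(π',R)(s). That is, whatever policy the agent follows, some admissible reward function gives it at least half of the worst-case achievable regret. -/

import Mathlib

/-!
Negating the reward negates every value, so `Reg(π,R) + Reg(π,-R) = max_π' V_R - min_π' V_R`,
which dominates `Reg(π',R)` for every `π'`. Hence the larger of `Reg(π,R)` and `Reg(π,-R)` is at
least half of `Reg(π',R)`. Both facts about values come from the contraction estimate
`‖v‖ ≤ ‖r‖ / (1 - γ)` for any solution of `v = r + γ P v` with `P` stochastic.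
-/

open Finset

section Bellman

variable {S : Type*} [Fintype S]

lemma abs_sum_mul_le_norm {p : S → ℝ} (hp0 : ∀ u, 0 ≤ p u) (hp1 : ∑ u, p u = 1) (d : S → ℝ) :
    |∑ u, p u * d u| ≤ ‖d‖ :=
  calc |∑ u, p u * d u| ≤ ∑ u, p u * ‖d‖ := by
        refine (abs_sum_le_sum_abs _ _).trans (sum_le_sum fun u _ => ?_)
        rw [abs_mul, abs_of_nonneg (hp0 u), ← Real.norm_eq_abs]
        exact mul_le_mul_of_nonneg_left (norm_le_pi_norm d u) (hp0 u)
    _ = ‖d‖ := by rw [← sum_mul, hp1, one_mul]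

lemma norm_le_of_bellman {P : S → S → ℝ} (hP : ∀ u, (∀ u', 0 ≤ P u u') ∧ ∑ u', P u u' = 1)
    {γ c : ℝ} (hγ0 : 0 ≤ γ) (hγ1 : γ < 1) {r v : S → ℝ} (hr : ‖r‖ ≤ c)
    (hv : ∀ u, v u = r u + γ * ∑ u', P u u' * v u') : ‖v‖ ≤ c / (1 - γ) := by
  have hc : 0 ≤ c := (norm_nonneg r).trans hr
  have hcontract : ‖v‖ ≤ c + γ * ‖v‖ := by
    refine (pi_norm_le_iff_of_nonneg (by positivity)).2 fun u => ?_
    calc ‖v u‖ ≤ ‖r u‖ + |γ| * |∑ u', P u u' * v u'| := by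
          rw [hv u, ← abs_mul]; exact norm_add_le _ _
      _ ≤ c + γ * ‖v‖ := by
          rw [abs_of_nonneg hγ0]
          gcongr
          · exact (norm_le_pi_norm r u).trans hr
          · exact abs_sum_mul_le_norm (hP u).1 (hP u).2 v
  rw [le_div_iff₀ (by linarith)]
  linarith

end Bellman

section Values

variable {S A : Type*} [Fintype S]

lemma value_neg {T : S → A → S → ℝ} (hT : ∀ s a, (∀ s', 0 ≤ T s a s') ∧ ∑ s', T s a s' = 1)
    {γ : ℝ} (hγ0 : 0 ≤ γ) (hγ1 : γ < 1) {V : (S → A) → (S × A → ℝ) → S → ℝ}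
    (hV : ∀ π R s, V π R s = R (s, π s) + γ * ∑ s', T s (π s) s' * V π R s')
    (π : S → A) (R : S × A → ℝ) (s : S) : V π (-R) s = -V π R s := by
  -- `V π (-R) + V π R` solves the Bellman equation with zero reward.
  have hzero : ‖V π (-R) + V π R‖ ≤ 0 / (1 - γ) := by
    refine norm_le_of_bellman (fun u => hT u (π u)) hγ0 hγ1 (r := 0) norm_zero.le fun u => ?_
    simp only [Pi.add_apply, Pi.zero_apply, mul_add, sum_add_distrib]
    rw [hV π (-R) u, hV π R u, Pi.neg_apply]
    ring
  rw [zero_div, norm_le_zero_iff] at hzero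
  exact eq_neg_of_add_eq_zero_left (congrFun hzero s)

lemma abs_value_le {T : S → A → S → ℝ} (hT : ∀ s a, (∀ s', 0 ≤ T s a s') ∧ ∑ s', T s a s' = 1)
    {γ : ℝ} (hγ0 : 0 ≤ γ) (hγ1 : γ < 1) {V : (S → A) → (S × A → ℝ) → S → ℝ}
    (hV : ∀ π R s, V π R s = R (s, π s) + γ * ∑ s', T s (π s) s' * V π R s')
    (π : S → A) {R : S × A → ℝ} (hR : ∀ x, R x ∈ Set.Icc (-1 : ℝ) 1) (s : S) :
    |V π R s| ≤ 1 / (1 - γ) := by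
  have hr : ‖fun u => R (u, π u)‖ ≤ 1 :=
    (pi_norm_le_iff_of_nonneg zero_le_one).2 fun u => abs_le.2 (hR _)
  calc |V π R s| = ‖V π R s‖ := (Real.norm_eq_abs _).symm
    _ ≤ ‖V π R‖ := norm_le_pi_norm _ s
    _ ≤ 1 / (1 - γ) := norm_le_of_bellman (fun u => hT u (π u)) hγ0 hγ1 hr (hV π R)

end Values

section Regret

variable {S A : Type*}

abbrev AdmissibleReward (S A : Type*) := {R : S × A → ℝ // ∀ x, R x ∈ Set.Icc (-1 : ℝ) 1}

def AdmissibleReward.neg (R : AdmissibleReward S A) : AdmissibleReward S A :=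
  ⟨-R.1, fun x => Set.neg_mem_Icc_iff.2 (by rw [neg_neg]; exact R.2 x)⟩

noncomputable def regret (V : (S → A) → (S × A → ℝ) → S → ℝ) (π : S → A) (R : S × A → ℝ) (s : S) :
    ℝ :=
  (⨆ π', V π' R s) - V π R s

variable {V : (S → A) → (S × A → ℝ) → S → ℝ} {R : S × A → ℝ} {s : S} {B : ℝ}

lemma bddAbove_range_value (hB : ∀ π, |V π R s| ≤ B) : BddAbove (Set.range fun π => V π R s) :=
  ⟨B, by rintro _ ⟨π, rfl⟩; exact (abs_le.1 (hB π)).2⟩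

lemma regret_nonneg (hB : ∀ π, |V π R s| ≤ B) (π : S → A) : 0 ≤ regret V π R s :=
  sub_nonneg.2 (le_ciSup (bddAbove_range_value hB) π)

lemma regret_le (hB : ∀ π, |V π R s| ≤ B) (π : S → A) : regret V π R s ≤ 2 * B := by
  have hsup : (⨆ π', V π' R s) ≤ B :=
    Real.iSup_le (fun π' => (abs_le.1 (hB π')).2) ((abs_nonneg _).trans (hB π))
  unfold regret
  linarith [(abs_le.1 (hB π)).1]

lemma regret_le_regret_add_regret_neg (hB : ∀ π, |V π R s| ≤ B)
    (hneg : ∀ π, V π (-R) s = -V π R s) (π π' : S → A) :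
    regret V π' R s ≤ regret V π R s + regret V π (-R) s := by
  have hBneg (π'' : S → A) : |V π'' (-R) s| ≤ B := by rw [hneg, abs_neg]; exact hB π''
  have hmin : -V π' R s ≤ ⨆ π'', V π'' (-R) s :=
    hneg π' ▸ le_ciSup (bddAbove_range_value hBneg) π'
  unfold regret
  linarith [hneg π]

end Regret

theorem half_maximal_regret_general {S A : Type*}
    [Fintype S]
    (T : S → A → S → ℝ)
    (hT : ∀ s a, (∀ s', 0 ≤ T s a s') ∧ ∑ s', T s a s' = 1)
    (γ : ℝ) (hγ0 : 0 ≤ γ) (hγ1 : γ < 1)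
    (V : (S → A) → (S × A → ℝ) → S → ℝ)
    (hV : ∀ (π : S → A) (R : S × A → ℝ) (s : S),
      V π R s = R (s, π s) + γ * ∑ s', T s (π s) s' * V π R s')
    (π : S → A) (s : S) :
    (1 / 2) * (⨆ q : (S → A) × {R : S × A → ℝ // ∀ x, R x ∈ Set.Icc (-1 : ℝ) 1},
        (⨆ π' : S → A, V π' q.2.1 s) - V q.1 q.2.1 s)
      ≤ ⨆ R : {R : S × A → ℝ // ∀ x, R x ∈ Set.Icc (-1 : ℝ) 1},
        (⨆ π' : S → A, V π' R.1 s) - V π R.1 s := by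
  show 1 / 2 * ⨆ q : (S → A) × AdmissibleReward S A, regret V q.1 q.2.1 s
    ≤ ⨆ R : AdmissibleReward S A, regret V π R.1 s
  have hB (R : AdmissibleReward S A) (π' : S → A) : |V π' R.1 s| ≤ 1 / (1 - γ) :=
    abs_value_le hT hγ0 hγ1 hV π' R.2 s
  have hbdd : BddAbove (Set.range fun R : AdmissibleReward S A => regret V π R.1 s) :=
    ⟨2 * (1 / (1 - γ)), by rintro _ ⟨R, rfl⟩; exact regret_le (hB R) π⟩
  have hnonneg : 0 ≤ ⨆ R : AdmissibleReward S A, regret V π R.1 s :=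
    Real.iSup_nonneg fun R => regret_nonneg (hB R) π
  have hpair (q : (S → A) × AdmissibleReward S A) :
      regret V q.1 q.2.1 s ≤ 2 * ⨆ R : AdmissibleReward S A, regret V π R.1 s := by
    obtain ⟨π', R⟩ := q
    have hsplit : regret V π' R.1 s ≤ regret V π R.1 s + regret V π R.neg.1 s :=
      regret_le_regret_add_regret_neg (hB R)
        (fun π'' => value_neg hT hγ0 hγ1 hV π'' R.1 s) π π'
    linarith [le_ciSup hbdd R, le_ciSup hbdd R.neg]
  linarith [Real.iSup_le hpair (by linarith)]

/-- No Free Lunch, half-maximal regret: in a finite discounted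
MDP, for any policy `π` and state `s`, the supremum over admissible reward
functions `R ∈ [-1,1]^{S×A}` of `Reg(π,R)(s)` is at least half the supremum over
pairs `(π', R)` of `Reg(π',R)(s)`. -/
theorem half_maximal_regret {S A : Type*}
    [Fintype S] [Fintype A] [Nonempty S] [Nonempty A] [DecidableEq S]
    (T : S → A → S → ℝ)
    (hT : ∀ s a, (∀ s', 0 ≤ T s a s') ∧ ∑ s', T s a s' = 1)
    (γ : ℝ) (hγ0 : 0 ≤ γ) (hγ1 : γ < 1)
    (V : (S → A) → (S × A → ℝ) → S → ℝ)
    (hV : ∀ (π : S → A) (R : S × A → ℝ) (s : S),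
      V π R s = R (s, π s) + γ * ∑ s', T s (π s) s' * V π R s')
    (π : S → A) (s : S) :
    (1 / 2) * (⨆ q : (S → A) × {R : S × A → ℝ // ∀ x, R x ∈ Set.Icc (-1 : ℝ) 1},
        (⨆ π' : S → A, V π' q.2.1 s) - V q.1 q.2.1 s)
      ≤ ⨆ R : {R : S × A → ℝ // ∀ x, R x ∈ Set.Icc (-1 : ℝ) 1},
        (⨆ π' : S → A, V π' R.1 s) - V π R.1 s :=
  half_maximal_regret_general T hT γ hγ0 hγ1 V hV π s
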